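/- Let n ≥ 2 and let T be the set of pairs (ε_{−i,i} ⊔ ε_{−j,j}, ε_{−i,i} ⊔ ε_{i,j}) for 1 ≤ i < j ≤ n, viewed as relations on the monoid SP_n of signed partitions of [±n]. If H and K are disjoint nonempty zero subsets of [±n] (i.e. −H = H, −K = K, H ∩ K = ∅), then the pair (μ_H ⊔ μ_K, μ_{H∪K}) lies in the congruence on SP_n generated by T. -/

import Mathlib

instance setoidCommMonoid (α : Type*) : CommMonoid (Setoid α) where
  mul := (· ⊔ ·)
  one := ⊥
  mul_assoc := sup_assoc
  one_mul := bot_sup_eq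
  mul_one := sup_bot_eq
  mul_comm := sup_comm

def muSet {α : Type*} (X : Set α) : Setoid α :=
  Relation.EqvGen.setoid (fun x y => x ∈ X ∧ y ∈ X)

def mu {α : Type*} (i j : α) : Setoid α := muSet {i, j}

/-- `[±n]`: nonzero integers of absolute value at most `n`, with the order from `ℤ`. -/
abbrev PM (n : ℕ) := {k : ℤ // k ≠ 0 ∧ |k| ≤ (n : ℤ)}

namespace PM

/-- The negation involution `k ↦ -k` on `[±n]`. -/
def neg {n : ℕ} (x : PM n) : PM n :=
  ⟨-x.1, by obtain ⟨h1, h2⟩ := x.2; exact ⟨neg_ne_zero.mpr h1, by rwa [abs_neg]⟩⟩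

@[simp] theorem neg_neg {n : ℕ} (x : PM n) : x.neg.neg = x := Subtype.ext (by simp [neg])

theorem neg_lt_neg {n : ℕ} {x y : PM n} (h : x < y) : y.neg < x.neg := by
  have h' : x.1 < y.1 := Subtype.coe_lt_coe.mpr h
  rw [← Subtype.coe_lt_coe]
  show -y.1 < -x.1
  omega

theorem neg_lt_pos {n : ℕ} {x y : PM n} (hx : 0 < x.1) (hy : 0 < y.1) : x.neg < y := by
  rw [← Subtype.coe_lt_coe]
  show -x.1 < y.1
  omega

theorem pos_ne_neg {n : ℕ} {x y : PM n} (hx : 0 < x.1) (hy : 0 < y.1) : y ≠ x.neg := by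
  intro h
  have : y.1 = -x.1 := congrArg Subtype.val h
  omega

theorem neg_lt_self {n : ℕ} {x : PM n} (hx : 0 < x.1) : x.neg < x := neg_lt_pos hx hx

/-- The absolute value map `x ↦ |x|` from `[±n]` to its positive part. -/
def abs {n : ℕ} (x : PM n) : PM n :=
  ⟨|x.1|, by obtain ⟨h1, h2⟩ := x.2; exact ⟨abs_ne_zero.mpr h1, by rwa [abs_abs]⟩⟩

end PM

/-- Image of a subset of `[±n]` under negation. -/
def negSet {n : ℕ} (K : Set (PM n)) : Set (PM n) := PM.neg '' K

/-- The partition `I⁻` transported along negation: `x ∼ y` in `negPart I` iff `-x ∼ -y` in `I`. -/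
def negPart {n : ℕ} (I : Setoid (PM n)) : Setoid (PM n) := Setoid.comap PM.neg I

/-- A set partition `I` of `[±n]` is *signed* if for every block `K` of `I` the set `-K` is
also a block; equivalently, `x ∼ y ↔ -x ∼ -y` for all `x, y`. -/
def IsSigned {n : ℕ} (I : Setoid (PM n)) : Prop :=
  ∀ x y : PM n, I x y ↔ I (PM.neg x) (PM.neg y)

/-- A *zero block* of a partition `I` is a block `K` with `-K = K`. -/
def IsZeroBlock {n : ℕ} (I : Setoid (PM n)) (K : Set (PM n)) : Prop :=
  K ∈ I.classes ∧ negSet K = K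

/-- A `Bₙ`-partition: a signed partition of `[±n]` with at most one zero block. -/
def IsBPart {n : ℕ} (I : Setoid (PM n)) : Prop :=
  IsSigned I ∧ Set.Subsingleton {K | IsZeroBlock I K}

/-- A *restricted* signed partition: all its zero blocks have more than two elements. -/
def IsRestricted {n : ℕ} (I : Setoid (PM n)) : Prop :=
  IsSigned I ∧ ∀ K : Set (PM n), IsZeroBlock I K → 2 < K.ncard

/-- A `Dₙ`-partition: a `Bₙ`-partition whose zero block (if present) has more than two
elements. -/
def IsDPart {n : ℕ} (I : Setoid (PM n)) : Prop :=
  IsBPart I ∧ ∀ K : Set (PM n), IsZeroBlock I K → 2 < K.ncard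

/-- For `i < j` in `[±n]`, the signed partition `ε_{i,j} = μ_{-j,-i} ⊔ μ_{i,j}`. -/
def eps {n : ℕ} (i j : PM n) : Setoid (PM n) := mu (PM.neg j) (PM.neg i) ⊔ mu i j

theorem PM.neg_injective {n : ℕ} : Function.Injective (PM.neg : PM n → PM n) :=
  Function.LeftInverse.injective PM.neg_neg

theorem negPart_rel {n : ℕ} (I : Setoid (PM n)) (x y : PM n) :
    negPart I x y ↔ I (PM.neg x) (PM.neg y) := Iff.rfl

theorem negPart_mono {n : ℕ} {I J : Setoid (PM n)} (h : I ≤ J) : negPart I ≤ negPart J := by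
  rw [Setoid.le_def] at h ⊢
  intro x y hxy
  exact h hxy

theorem negPart_negPart {n : ℕ} (I : Setoid (PM n)) : negPart (negPart I) = I := by
  apply Setoid.ext
  intro x y
  show I (PM.neg (PM.neg x)) (PM.neg (PM.neg y)) ↔ I x y
  rw [PM.neg_neg, PM.neg_neg]

theorem negPart_sup {n : ℕ} (I J : Setoid (PM n)) :
    negPart (I ⊔ J) = negPart I ⊔ negPart J := by
  apply le_antisymm
  · have h1 : I ⊔ J ≤ negPart (negPart I ⊔ negPart J) := by
      have h2 : negPart (negPart I) ⊔ negPart (negPart J) ≤ negPart (negPart I ⊔ negPart J) :=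
        sup_le (negPart_mono le_sup_left) (negPart_mono le_sup_right)
      simpa [negPart_negPart] using h2
    have h3 := negPart_mono h1
    simpa [negPart_negPart] using h3
  · exact sup_le (negPart_mono le_sup_left) (negPart_mono le_sup_right)

theorem isSigned_iff_negPart_eq {n : ℕ} (I : Setoid (PM n)) :
    IsSigned I ↔ negPart I = I := by
  constructor
  · intro h
    apply Setoid.ext
    intro x y
    exact (h x y).symm
  · intro h x y
    have h' := Setoid.ext_iff.mp h x y
    exact h'.symm

/-- The submonoid `SPₙ` of signed partitions of `[±n]`. -/
def SPn (n : ℕ) : Submonoid (Setoid (PM n)) where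
  carrier := {I | IsSigned I}
  one_mem' := by
    intro x y
    show (⊥ : Setoid (PM n)) x y ↔ (⊥ : Setoid (PM n)) (PM.neg x) (PM.neg y)
    simp only [Setoid.bot_def]
    exact ⟨fun h => congrArg PM.neg h, fun h => PM.neg_injective h⟩
  mul_mem' := by
    intro a b ha hb
    replace ha : IsSigned a := ha
    replace hb : IsSigned b := hb
    show IsSigned (a ⊔ b)
    rw [isSigned_iff_negPart_eq] at ha hb ⊢
    rw [negPart_sup, ha, hb]

/-- The set `T` of pairs `(ε_{-i,i} ⊔ ε_{-j,j}, ε_{-i,i} ⊔ ε_{i,j})` for positive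
`i < j`, viewed as a binary relation on the monoid `SPₙ` of signed partitions. -/
def TRelB (n : ℕ) : ↥(SPn n) → ↥(SPn n) → Prop := fun a b =>
  ∃ i j : PM n, 0 < i.1 ∧ 0 < j.1 ∧ i < j ∧
    (a : Setoid (PM n)) = eps (PM.neg i) i ⊔ eps (PM.neg j) j ∧
    (b : Setoid (PM n)) = eps (PM.neg i) i ⊔ eps i j

/-!
Pick positive `a ∈ H` and `b ∈ K`; they differ since `H ∩ K = ∅`, and by symmetry `a < b`.
As `ε_{-a,a} = μ_{-a,a} ≤ μ_H` and `ε_{-b,b} = μ_{-b,b} ≤ μ_K`, multiplying the generator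
`(ε_{-a,a} ⊔ ε_{-b,b}, ε_{-a,a} ⊔ ε_{a,b})` of `T` by `μ_H ⊔ μ_K` gives the pair
`(μ_H ⊔ μ_K, μ_H ⊔ μ_K ⊔ ε_{a,b})`, and `ε_{a,b} ≤ μ_{H ∪ K}` merges the blocks `H ∋ a` and
`K ∋ b`, so the second component is `μ_{H ∪ K}`.
-/

section MuSet

variable {α : Type*}

theorem muSet_le {S : Set α} {I : Setoid α} (h : ∀ x ∈ S, ∀ y ∈ S, I x y) : muSet S ≤ I :=
  Setoid.eqvGen_le fun x y hxy => h x hxy.1 y hxy.2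

theorem muSet_mono {S T : Set α} (h : S ⊆ T) : muSet S ≤ muSet T :=
  Setoid.eqvGen_mono fun _ _ hxy => ⟨h hxy.1, h hxy.2⟩

theorem muSet_rel {S : Set α} {x y : α} (hx : x ∈ S) (hy : y ∈ S) : muSet S x y :=
  Relation.EqvGen.rel _ _ ⟨hx, hy⟩

theorem mu_le_muSet {S : Set α} {i j : α} (hi : i ∈ S) (hj : j ∈ S) : mu i j ≤ muSet S :=
  muSet_mono (Set.pair_subset hi hj)

theorem mu_comm (i j : α) : mu i j = mu j i := by
  rw [mu, mu, Set.pair_comm]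

theorem muSet_union_eq_sup_mu {S T : Set α} {x y : α} (hx : x ∈ S) (hy : y ∈ T) :
    muSet (S ∪ T) = muSet S ⊔ muSet T ⊔ mu x y := by
  set I := muSet S ⊔ muSet T ⊔ mu x y
  refine le_antisymm (muSet_le ?_) (sup_le (sup_le (muSet_mono Set.subset_union_left)
    (muSet_mono Set.subset_union_right)) (mu_le_muSet (.inl hx) (.inr hy)))
  have hSI : muSet S ≤ I := le_sup_left.trans le_sup_left
  have hTI : muSet T ≤ I := le_sup_right.trans le_sup_left
  have hxy : I x y := Setoid.le_def.mp le_sup_right (muSet_rel (by simp) (by simp))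
  have hrel_y : ∀ u ∈ S ∪ T, I u y := by
    rintro u (hu | hu)
    · exact I.trans (Setoid.le_def.mp hSI (muSet_rel hu hx)) hxy
    · exact Setoid.le_def.mp hTI (muSet_rel hu hy)
  exact fun u hu v hv => I.trans (hrel_y u hu) (I.symm (hrel_y v hv))

end MuSet

section Signed

variable {n : ℕ}

theorem neg_mem_of_negSet_eq {Z : Set (PM n)} (hZ : negSet Z = Z) {x : PM n} (hx : x ∈ Z) :
    x.neg ∈ Z :=
  hZ ▸ Set.mem_image_of_mem PM.neg hx

theorem exists_pos_mem_of_negSet_eq {Z : Set (PM n)} (hZ : negSet Z = Z) (hne : Z.Nonempty) :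
    ∃ a ∈ Z, 0 < a.1 := by
  obtain ⟨x, hx⟩ := hne
  rcases x.2.1.lt_or_gt with hneg | hpos
  · exact ⟨x.neg, neg_mem_of_negSet_eq hZ hx, neg_pos.mpr hneg⟩
  · exact ⟨x, hx, hpos⟩

theorem mu_neg_le_muSet {Z : Set (PM n)} (hZ : negSet Z = Z) {a : PM n} (ha : a ∈ Z) :
    mu a.neg a ≤ muSet Z :=
  mu_le_muSet (neg_mem_of_negSet_eq hZ ha) ha

theorem mu_le_negPart_mu (u v : PM n) : mu u v ≤ negPart (mu u.neg v.neg) :=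
  muSet_le fun _ hx _ hy => muSet_rel (Set.image_pair PM.neg u v ▸ Set.mem_image_of_mem _ hx)
    (Set.image_pair PM.neg u v ▸ Set.mem_image_of_mem _ hy)

theorem isSigned_of_le_negPart {I : Setoid (PM n)} (h : I ≤ negPart I) : IsSigned I := by
  refine (isSigned_iff_negPart_eq I).mpr (le_antisymm ?_ h)
  simpa only [negPart_negPart] using negPart_mono h

theorem isSigned_eps (i j : PM n) : IsSigned (eps i j) := by
  refine isSigned_of_le_negPart (sup_le ?_ ?_)
  · have h := mu_le_negPart_mu j.neg i.neg
    rw [PM.neg_neg, PM.neg_neg, mu_comm j i] at h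
    exact h.trans (negPart_mono le_sup_right)
  · exact (mu_le_negPart_mu i j).trans (negPart_mono (by rw [mu_comm]; exact le_sup_left))

theorem eps_neg_self (a : PM n) : eps a.neg a = mu a.neg a := by
  rw [eps, PM.neg_neg, sup_idem]

def epsSup (i j k l : PM n) : SPn n :=
  ⟨eps i j ⊔ eps k l, (SPn n).mul_mem (isSigned_eps i j) (isSigned_eps k l)⟩

end Signed

section Generator

variable {n : ℕ} {H K : Set (PM n)} {a b : PM n}

theorem eps_neg_self_sup_le (hH : negSet H = H) (hK : negSet K = K) (haH : a ∈ H)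
    (hbK : b ∈ K) : eps a.neg a ⊔ eps b.neg b ≤ muSet H ⊔ muSet K := by
  rw [eps_neg_self, eps_neg_self]
  exact sup_le_sup (mu_neg_le_muSet hH haH) (mu_neg_le_muSet hK hbK)

theorem eps_neg_self_sup_eps_sup (hH : negSet H = H) (hK : negSet K = K) (haH : a ∈ H)
    (hbK : b ∈ K) : eps a.neg a ⊔ eps a b ⊔ (muSet H ⊔ muSet K) = muSet (H ∪ K) := by
  apply le_antisymm
  · refine sup_le (sup_le ?_ (sup_le ?_ (mu_le_muSet (.inl haH) (.inr hbK))))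
      (sup_le (muSet_mono Set.subset_union_left) (muSet_mono Set.subset_union_right))
    · rw [eps_neg_self]
      exact mu_le_muSet (.inl (neg_mem_of_negSet_eq hH haH)) (.inl haH)
    · exact mu_le_muSet (.inr (neg_mem_of_negSet_eq hK hbK))
        (.inl (neg_mem_of_negSet_eq hH haH))
  · rw [muSet_union_eq_sup_mu haH hbK]
    exact sup_le le_sup_right ((le_sup_right.trans le_sup_right).trans le_sup_left)

theorem conGen_TRelB_of_lt (hH : negSet H = H) (hK : negSet K = K) (ha : 0 < a.1) (hab : a < b)
    (haH : a ∈ H) (hbK : b ∈ K) {A B : SPn n} (hA : (A : Setoid (PM n)) = muSet H ⊔ muSet K)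
    (hB : (B : Setoid (PM n)) = muSet (H ∪ K)) : conGen (TRelB n) A B := by
  have hgen : conGen (TRelB n) (epsSup a.neg a b.neg b) (epsSup a.neg a a b) :=
    ConGen.Rel.of _ _ ⟨a, b, ha, ha.trans hab, hab, rfl, rfl⟩
  have hX : epsSup a.neg a b.neg b * A = A := Subtype.ext <| by
    rw [Submonoid.coe_mul, hA]
    exact sup_eq_right.mpr (eps_neg_self_sup_le hH hK haH hbK)
  have hY : epsSup a.neg a a b * A = B := Subtype.ext <| by
    rw [Submonoid.coe_mul, hA, hB]
    exact eps_neg_self_sup_eps_sup hH hK haH hbK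
  simpa only [hX, hY] using (conGen (TRelB n)).mul hgen ((conGen (TRelB n)).refl A)

end Generator

theorem muH_muK_conGen_T_general (n : ℕ) (H K : Set (PM n))
    (hHne : H.Nonempty) (hKne : K.Nonempty)
    (hHz : negSet H = H) (hKz : negSet K = K) (hdisj : H ∩ K = ∅) :
    ∀ a b : ↥(SPn n),
      (a : Setoid (PM n)) = muSet H ⊔ muSet K →
      (b : Setoid (PM n)) = muSet (H ∪ K) →
      conGen (TRelB n) a b := by
  intro A B hA hB
  obtain ⟨a, haH, ha⟩ := exists_pos_mem_of_negSet_eq hHz hHne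
  obtain ⟨b, hbK, hb⟩ := exists_pos_mem_of_negSet_eq hKz hKne
  have hne : a ≠ b := fun h => Set.eq_empty_iff_forall_notMem.mp hdisj a ⟨haH, h ▸ hbK⟩
  rcases hne.lt_or_gt with hab | hba
  · exact conGen_TRelB_of_lt hHz hKz ha hab haH hbK hA hB
  · exact conGen_TRelB_of_lt hKz hHz hb hba hbK haH (hA.trans (sup_comm _ _))
      (hB.trans (by rw [Set.union_comm]))

/-- If `H` and `K` are disjoint nonempty zero subsets of `[±n]`
(`-H = H`, `-K = K`, `H ∩ K = ∅`), then the pair `(μ_H ⊔ μ_K, μ_{H∪K})` lies in the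
congruence on `SPₙ` generated by `T`. -/
theorem muH_muK_conGen_T (n : ℕ) (hn : 2 ≤ n) (H K : Set (PM n))
    (hHne : H.Nonempty) (hKne : K.Nonempty)
    (hHz : negSet H = H) (hKz : negSet K = K) (hdisj : H ∩ K = ∅) :
    ∀ a b : ↥(SPn n),
      (a : Setoid (PM n)) = muSet H ⊔ muSet K →
      (b : Setoid (PM n)) = muSet (H ∪ K) →
      conGen (TRelB n) a b :=
  muH_muK_conGen_T_general n H K hHne hKne hHz hKz hdisj
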